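/- arXiv:1801.06198 — 4 statements merged into one kernel-verified Lean document; each statement's English description precedes it below -/
import Mathlib

section
/- (Error Reduction Lemma) Let X be a uniformly smooth Banach space with modulus of smoothness ρ. Let f, f^ε ∈ X with ‖f − f^ε‖ ≤ ε and f^ε/A ∈ A_1(D) for some A ≥ ε > 0. Suppose f = f_{m-1} + G_{m-1} with f_{m-1} ≠ 0, F_{f_{m-1}}(G_{m-1}) = 0, and φ_m ∈ D satisfies F_{f_{m-1}}(φ_m) ≥ t_m sup_{g∈D} F_{f_{m-1}}(g). Then inf_{λ≥0} ‖f_{m-1} − λφ_m‖ ≤ ‖f_{m-1}‖ · inf_{λ≥0} (1 − λ t_m A^{−1}(1 − ε/‖f_{m-1}‖) + 2ρ(λ/‖f_{m-1}‖)). -/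
noncomputable def modulusOfSmoothness (X : Type*) [NormedAddCommGroup X] [NormedSpace ℝ X]
    (u : ℝ) : ℝ :=
  sSup { r : ℝ | ∃ x y : X, ‖x‖ = 1 ∧ ‖y‖ = 1 ∧ r = (‖x + u • y‖ + ‖x - u • y‖) / 2 - 1 }

def UniformlySmooth (X : Type*) [NormedAddCommGroup X] [NormedSpace ℝ X] : Prop :=
  Filter.Tendsto (fun u : ℝ => modulusOfSmoothness X u / u)
    (nhdsWithin 0 (Set.Ioi 0)) (nhds 0)

/-!
For `λ ≥ 0` the smoothness inequality gives
`‖f_{m-1} - λφ‖ ≤ 2‖f_{m-1}‖(1 + ρ(λ/‖f_{m-1}‖)) - ‖f_{m-1} + λφ‖`, and testing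
`f_{m-1} + λφ` against the norming functional `F` bounds the last norm below by
`‖f_{m-1}‖ + λ F φ`. The greedy choice of `φ` gives `F φ ≥ t · sup_D F`, and since `F` is
bounded on `A_1(D)` by `sup_D F`, `A · sup_D F ≥ F fε ≥ F f - ε = ‖f_{m-1}‖ - ε`
(using `F G_{m-1} = 0`). Taking infima over `λ` finishes the proof.
-/

section ModulusOfSmoothness

variable {X : Type*} [NormedAddCommGroup X] [NormedSpace ℝ X]

lemma le_modulusOfSmoothness {x y : X} (hx : ‖x‖ = 1) (hy : ‖y‖ = 1) (u : ℝ) :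
    (‖x + u • y‖ + ‖x - u • y‖) / 2 - 1 ≤ modulusOfSmoothness X u := by
  refine le_csSup ⟨|u|, ?_⟩ ⟨x, y, hx, hy, rfl⟩
  rintro r ⟨x, y, hx, hy, rfl⟩
  have hxy₁ : ‖x + u • y‖ ≤ 1 + |u| := by
    simpa [norm_smul, hx, hy] using norm_add_le x (u • y)
  have hxy₂ : ‖x - u • y‖ ≤ 1 + |u| := by
    simpa [norm_smul, hx, hy] using norm_sub_le x (u • y)
  linarith

/-- `s ↦ ‖x + s • y‖ + ‖x - s • y‖` is convex and even, hence nondecreasing on `[0, ∞)`. -/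
lemma norm_add_smul_add_norm_sub_smul_mono (x y : X) {s u : ℝ} (hs : 0 ≤ s) (hsu : s ≤ u) :
    ‖x + s • y‖ + ‖x - s • y‖ ≤ ‖x + u • y‖ + ‖x - u • y‖ := by
  obtain rfl | hu := (hs.trans hsu).eq_or_lt
  · rw [le_antisymm hsu hs]
  set a := (u + s) / (2 * u)
  have ha₀ : 0 ≤ a := by positivity
  have ha₁ : 0 ≤ 1 - a := by
    rw [sub_nonneg, div_le_one (by positivity)]; linarith
  have hsa : s = u * (2 * a - 1) := by simp only [a]; field_simp; ring
  have hplus : x + s • y = a • (x + u • y) + (1 - a) • (x - u • y) := by rw [hsa]; module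
  have hminus : x - s • y = (1 - a) • (x + u • y) + a • (x - u • y) := by rw [hsa]; module
  have hconv (b : ℝ) (hb₀ : 0 ≤ b) (hb₁ : 0 ≤ 1 - b) :
      ‖b • (x + u • y) + (1 - b) • (x - u • y)‖ ≤ b * ‖x + u • y‖ + (1 - b) * ‖x - u • y‖ := by
    refine (norm_add_le _ _).trans_eq ?_
    rw [norm_smul, norm_smul, Real.norm_of_nonneg hb₀, Real.norm_of_nonneg hb₁]
  have h₁ := hconv a ha₀ ha₁
  have h₂ := hconv (1 - a) ha₁ (by linarith)
  rw [sub_sub_cancel, ← hminus] at h₂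
  rw [← hplus] at h₁
  linarith

lemma norm_add_smul_add_norm_sub_smul_le_of_norm_eq_one {x y : X} (hx : ‖x‖ = 1)
    (hy : ‖y‖ ≤ 1) {u : ℝ} (hu : 0 ≤ u) :
    ‖x + u • y‖ + ‖x - u • y‖ ≤ 2 * (1 + modulusOfSmoothness X u) := by
  -- write `y = ‖y‖ • e` with `‖e‖ = 1`; for `y = 0` the unit vector `x` serves as `e`
  obtain ⟨e, he, hye⟩ : ∃ e : X, ‖e‖ = 1 ∧ y = ‖y‖ • e := by
    by_cases hy₀ : y = 0
    · exact ⟨x, hx, by simp [hy₀]⟩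
    · have hy₀ : ‖y‖ ≠ 0 := norm_ne_zero_iff.mpr hy₀
      refine ⟨‖y‖⁻¹ • y, by rw [norm_smul, norm_inv, norm_norm, inv_mul_cancel₀ hy₀], ?_⟩
      rw [smul_smul, mul_inv_cancel₀ hy₀, one_smul]
  have hmono := norm_add_smul_add_norm_sub_smul_mono x e (mul_nonneg hu (norm_nonneg y))
    (mul_le_of_le_one_right hu hy)
  have hρ := le_modulusOfSmoothness hx he u
  rw [hye, smul_smul]
  linarith

lemma norm_add_smul_add_norm_sub_smul_le {x y : X} (hx : x ≠ 0) (hy : ‖y‖ ≤ 1) {l : ℝ}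
    (hl : 0 ≤ l) :
    ‖x + l • y‖ + ‖x - l • y‖ ≤ 2 * ‖x‖ * (1 + modulusOfSmoothness X (l / ‖x‖)) := by
  have hx₀ : 0 < ‖x‖ := norm_pos_iff.mpr hx
  have hx₁ : ‖‖x‖⁻¹ • x‖ = 1 := by rw [norm_smul, norm_inv, norm_norm, inv_mul_cancel₀ hx₀.ne']
  have hunit := norm_add_smul_add_norm_sub_smul_le_of_norm_eq_one hx₁ hy (div_nonneg hl hx₀.le)
  have hplus : x + l • y = ‖x‖ • (‖x‖⁻¹ • x + (l / ‖x‖) • y) := by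
    simp [smul_add, smul_smul, hx₀.ne', mul_div_cancel₀]
  have hminus : x - l • y = ‖x‖ • (‖x‖⁻¹ • x - (l / ‖x‖) • y) := by
    simp [smul_sub, smul_smul, hx₀.ne', mul_div_cancel₀]
  rw [hplus, hminus, norm_smul, norm_smul, norm_norm, ← mul_add, mul_comm 2 ‖x‖, mul_assoc]
  exact mul_le_mul_of_nonneg_left hunit hx₀.le

end ModulusOfSmoothness

section NormingFunctional

variable {X : Type*} [NormedAddCommGroup X] [NormedSpace ℝ X] {F : X →L[ℝ] ℝ}

lemma apply_le_norm_of_opNorm_le_one (hF : ‖F‖ ≤ 1) (x : X) : F x ≤ ‖x‖ :=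
  (le_abs_self _).trans ((F.le_of_opNorm_le hF x).trans_eq (one_mul _))

lemma norm_sub_smul_le_of_apply_eq_norm (hF : ‖F‖ ≤ 1) {x y : X} (hFx : F x = ‖x‖)
    (hx : x ≠ 0) (hy : ‖y‖ ≤ 1) {l : ℝ} (hl : 0 ≤ l) :
    ‖x - l • y‖ ≤ ‖x‖ * (1 + 2 * modulusOfSmoothness X (l / ‖x‖)) - l * F y := by
  have hsmooth := norm_add_smul_add_norm_sub_smul_le hx hy hl
  have hnorming : ‖x‖ + l * F y ≤ ‖x + l • y‖ := by
    simpa [hFx] using apply_le_norm_of_opNorm_le_one hF (x + l • y)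
  linarith

lemma apply_le_sSup_image_of_mem_closure_convexHull {D : Set X} (hD : BddAbove (F '' D))
    {x : X} (hx : x ∈ closure (convexHull ℝ D)) : F x ≤ sSup (F '' D) := by
  have hsub : D ⊆ {z | F z ≤ sSup (F '' D)} := fun g hg => le_csSup hD ⟨g, hg, rfl⟩
  refine closure_minimal (convexHull_min hsub ?_) (isClosed_le F.continuous continuous_const) hx
  exact convex_halfSpace_le F.toLinearMap.isLinear _

lemma inv_mul_sub_le_sSup_image (hF : ‖F‖ ≤ 1) {D : Set X} (hD : BddAbove (F '' D))
    {f fε : X} {ε A : ℝ} (hA : 0 ≤ A) (hfε : ‖f - fε‖ ≤ ε)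
    (hfA : A⁻¹ • fε ∈ closure (convexHull ℝ D)) :
    A⁻¹ * (F f - ε) ≤ sSup (F '' D) := by
  have hsup := apply_le_sSup_image_of_mem_closure_convexHull hD hfA
  have happrox : F f - ε ≤ F fε := by
    have := (apply_le_norm_of_opNorm_le_one hF (f - fε)).trans hfε
    rw [map_sub] at this
    linarith
  rw [map_smul, smul_eq_mul] at hsup
  exact (mul_le_mul_of_nonneg_left happrox (inv_nonneg.mpr hA)).trans hsup

end NormingFunctional

lemma ciInf_le_mul_ciInf {ι : Sort*} [Nonempty ι] {g h : ι → ℝ} {c : ℝ} (hc : 0 ≤ c)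
    (hg : BddBelow (Set.range g)) (hgh : ∀ i, g i ≤ c * h i) :
    ⨅ i, g i ≤ c * ⨅ i, h i := by
  rw [Real.mul_iInf_of_nonneg hc]
  exact ciInf_mono hg hgh

theorem stmt_8_general {X : Type*} [NormedAddCommGroup X] [NormedSpace ℝ X]
    (D : Set X) (hnorm : ∀ g ∈ D, ‖g‖ ≤ 1)
    (ε A : ℝ) (hε : 0 < ε) (hA : ε ≤ A)
    (f fε : X) (hfε : ‖f - fε‖ ≤ ε) (hfA : A⁻¹ • fε ∈ closure (convexHull ℝ D))
    (fm1 Gm1 : X) (hsum : f = fm1 + Gm1) (hfm1 : fm1 ≠ 0)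
    (F : X →L[ℝ] ℝ) (hF1 : ‖F‖ = 1) (hFf : F fm1 = ‖fm1‖) (hbo : F Gm1 = 0)
    (t : ℝ) (ht : t ∈ Set.Icc (0:ℝ) 1)
    (φ : X) (hφD : φ ∈ D) (hgreedy : F φ ≥ t * sSup (F '' D)) :
    (⨅ l : {x : ℝ // 0 ≤ x}, ‖fm1 - (l : ℝ) • φ‖) ≤
      ‖fm1‖ * ⨅ l : {x : ℝ // 0 ≤ x},
        (1 - (l : ℝ) * t * A⁻¹ * (1 - ε / ‖fm1‖)
          + 2 * modulusOfSmoothness X ((l : ℝ) / ‖fm1‖)) := by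
  have hF : ‖F‖ ≤ 1 := hF1.le
  have hfm1₀ : 0 < ‖fm1‖ := norm_pos_iff.mpr hfm1
  have hD : BddAbove (F '' D) := ⟨1, by
    rintro _ ⟨g, hg, rfl⟩
    exact (apply_le_norm_of_opNorm_le_one hF g).trans (hnorm g hg)⟩
  have hFf_sum : F f = ‖fm1‖ := by rw [hsum, map_add, hFf, hbo, add_zero]
  have hsup := inv_mul_sub_le_sSup_image hF hD (hε.le.trans hA) hfε hfA
  have hFφ : t * (A⁻¹ * (‖fm1‖ - ε)) ≤ F φ := by
    rw [← hFf_sum]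
    exact (mul_le_mul_of_nonneg_left hsup ht.1).trans hgreedy
  have : Nonempty {x : ℝ // 0 ≤ x} := ⟨⟨0, le_rfl⟩⟩
  refine ciInf_le_mul_ciInf hfm1₀.le ⟨0, fun _ ⟨_, h⟩ => h ▸ norm_nonneg _⟩ fun ⟨l, hl⟩ => ?_
  calc ‖fm1 - l • φ‖
      ≤ ‖fm1‖ * (1 + 2 * modulusOfSmoothness X (l / ‖fm1‖)) - l * F φ :=
        norm_sub_smul_le_of_apply_eq_norm hF hFf hfm1 (hnorm φ hφD) hl
    _ ≤ ‖fm1‖ * (1 + 2 * modulusOfSmoothness X (l / ‖fm1‖)) - l * (t * (A⁻¹ * (‖fm1‖ - ε))) := by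
        gcongr
    _ = ‖fm1‖ * (1 - l * t * A⁻¹ * (1 - ε / ‖fm1‖) + 2 * modulusOfSmoothness X (l / ‖fm1‖)) := by
        field_simp
        ring

/-- Error Reduction Lemma: if f = f_{m-1} + G_{m-1} with F_{f_{m-1}}(G_{m-1}) = 0,
φ_m is chosen greedily, ‖f - fε‖ ≤ ε and fε/A ∈ A₁(D) with A ≥ ε > 0, then
inf_{λ≥0} ‖f_{m-1} - λφ_m‖ ≤ ‖f_{m-1}‖ ⬝ inf_{λ≥0} (1 - λ t A⁻¹ (1 - ε/‖f_{m-1}‖)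
+ 2ρ(λ/‖f_{m-1}‖)). -/
theorem stmt_8 {X : Type*} [NormedAddCommGroup X] [NormedSpace ℝ X] [CompleteSpace X]
    (hsm : UniformlySmooth X)
    (D : Set X) (hsymm : ∀ g ∈ D, -g ∈ D) (hnorm : ∀ g ∈ D, ‖g‖ ≤ 1)
    (hdense : (Submodule.span ℝ D).topologicalClosure = ⊤)
    (ε A : ℝ) (hε : 0 < ε) (hA : ε ≤ A)
    (f fε : X) (hfε : ‖f - fε‖ ≤ ε) (hfA : A⁻¹ • fε ∈ closure (convexHull ℝ D))
    (fm1 Gm1 : X) (hsum : f = fm1 + Gm1) (hfm1 : fm1 ≠ 0)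
    (F : X →L[ℝ] ℝ) (hF1 : ‖F‖ = 1) (hFf : F fm1 = ‖fm1‖) (hbo : F Gm1 = 0)
    (t : ℝ) (ht : t ∈ Set.Icc (0:ℝ) 1)
    (φ : X) (hφD : φ ∈ D) (hgreedy : F φ ≥ t * sSup (F '' D)) :
    (⨅ l : {x : ℝ // 0 ≤ x}, ‖fm1 - (l : ℝ) • φ‖) ≤
      ‖fm1‖ * ⨅ l : {x : ℝ // 0 ≤ x},
        (1 - (l : ℝ) * t * A⁻¹ * (1 - ε / ‖fm1‖)
          + 2 * modulusOfSmoothness X ((l : ℝ) / ‖fm1‖)) :=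
  stmt_8_general D hnorm ε A hε hA f fε hfε hfA fm1 Gm1 hsum hfm1 F hF1 hFf hbo t ht φ hφD hgreedy
end

section
/- Let 1 < q ≤ 2, p = q/(q−1), A_q > 1, B > 0, and let {a_k}_{k≥0} be a sequence of nonnegative numbers with a_0 ≤ B and, for each k ≥ 1, a_k^p ≤ a_{k-1}^p (1 − t_k^p a_{k-1}^p / (A_q B^p)) where t_k ∈ [0,1]. Then for every m ≥ 1, a_m^p ≤ A_q B^p (1 + Σ_{k=1}^m t_k^p)^{−1}. -/
/-!
Put `x k = a k ^ p`, `s k = t k ^ p` and `C = A_q * B ^ p`. Then `x 0 ≤ C` and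
`x k ≤ x (k-1) * (1 - s k * x (k-1) / C)`, and one shows `x m * (1 + ∑_{k ≤ m} s k) ≤ C` by
induction on `m`: the inductive step rests on the identity
`C² - A (C - c A) (T + c) = (C - A T) (C - c A) + (c A)²`.
-/

open Finset

theorem mul_one_sub_mul_div_mul_add_le {A C T : ℝ} (c : ℝ) (hC : 0 < C) (hA : 0 ≤ A)
    (hT : 0 ≤ T) (hAT : A * T ≤ C) : A * (1 - c * A / C) * (T + c) ≤ C := by
  have hexp : A * (1 - c * A / C) * (T + c) = A * (C - c * A) * (T + c) / C := by
    field_simp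
  rw [hexp, div_le_iff₀ hC]
  have hidentity : C * C - A * (C - c * A) * (T + c) = (C - A * T) * (C - c * A) + (c * A) ^ 2 := by
    ring
  rcases le_total (c * A) C with hcA | hcA
  · nlinarith [mul_nonneg (sub_nonneg.2 hAT) (sub_nonneg.2 hcA)]
  · -- here `C - c A ≤ 0`, so the first product is at least `C (C - c A)`
    nlinarith [mul_nonneg (mul_nonneg hA hT) (sub_nonneg.2 hcA), sq_nonneg (c * A - C)]

theorem mul_one_add_sum_le_of_le_mul_one_sub {C : ℝ} (hC : 0 < C) {x s : ℕ → ℝ}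
    (hx : ∀ k, 0 ≤ x k) (hs : ∀ k, 0 ≤ s k) (hx0 : x 0 ≤ C)
    (hrec : ∀ k, x (k + 1) ≤ x k * (1 - s (k + 1) * x k / C)) (m : ℕ) :
    x m * (1 + ∑ k ∈ Icc 1 m, s k) ≤ C := by
  induction m with
  | zero => simpa using hx0
  | succ n ih =>
    have hS : 0 ≤ 1 + ∑ k ∈ Icc 1 n, s k := by
      linarith [sum_nonneg fun k (_ : k ∈ Icc 1 n) => hs k]
    rw [sum_Icc_succ_top (Nat.le_add_left 1 n), ← add_assoc]
    calc x (n + 1) * (1 + ∑ k ∈ Icc 1 n, s k + s (n + 1))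
        ≤ x n * (1 - s (n + 1) * x n / C) * (1 + ∑ k ∈ Icc 1 n, s k + s (n + 1)) :=
          mul_le_mul_of_nonneg_right (hrec n) (add_nonneg hS (hs _))
      _ ≤ C := mul_one_sub_mul_div_mul_add_le _ hC (hx n) hS ih

theorem stmt_9_general (q p A_q B : ℝ) (hq : 1 < q) (hp : p = q / (q - 1))
    (hAq : 1 < A_q) (hB : 0 < B)
    (a : ℕ → ℝ) (ha : ∀ k, 0 ≤ a k) (ha0 : a 0 ≤ B)
    (t : ℕ → ℝ) (ht : ∀ k, t k ∈ Set.Icc (0:ℝ) 1)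
    (hrec : ∀ k : ℕ, 1 ≤ k →
      a k ^ p ≤ a (k - 1) ^ p * (1 - t k ^ p * a (k - 1) ^ p / (A_q * B ^ p))) :
    ∀ m : ℕ, 1 ≤ m →
      a m ^ p ≤ A_q * B ^ p * (1 + ∑ k ∈ Finset.Icc 1 m, t k ^ p)⁻¹ := by
  intro m _
  have hp0 : 0 ≤ p := by
    rw [hp]; exact div_nonneg (by linarith) (by linarith)
  have hBp : 0 < B ^ p := Real.rpow_pos_of_pos hB p
  have hx0 : a 0 ^ p ≤ A_q * B ^ p :=
    (Real.rpow_le_rpow (ha 0) ha0 hp0).trans (le_mul_of_one_le_left hBp.le hAq.le)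
  have hmain := mul_one_add_sum_le_of_le_mul_one_sub (by positivity)
    (fun k => Real.rpow_nonneg (ha k) p) (fun k => Real.rpow_nonneg (ht k).1 p) hx0
    (fun k => by simpa using hrec (k + 1) (Nat.le_add_left 1 k)) m
  have hsum : 0 < 1 + ∑ k ∈ Finset.Icc 1 m, t k ^ p := by
    linarith [sum_nonneg fun k (_ : k ∈ Icc 1 m) => Real.rpow_nonneg (ht k).1 p]
  rwa [← div_eq_mul_inv, le_div_iff₀ hsum]

/-- the recursive sequence estimate (cf. DeVore–Temlyakov Lemma 3.4):
if a₀ ≤ B and aₖᵖ ≤ aₖ₋₁ᵖ (1 - tₖᵖ aₖ₋₁ᵖ / (A_q Bᵖ)), then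
aₘᵖ ≤ A_q Bᵖ (1 + ∑_{k=1}^m tₖᵖ)⁻¹. -/
theorem stmt_9 (q p A_q B : ℝ) (hq : 1 < q) (hq2 : q ≤ 2) (hp : p = q / (q - 1))
    (hAq : 1 < A_q) (hB : 0 < B)
    (a : ℕ → ℝ) (ha : ∀ k, 0 ≤ a k) (ha0 : a 0 ≤ B)
    (t : ℕ → ℝ) (ht : ∀ k, t k ∈ Set.Icc (0:ℝ) 1)
    (hrec : ∀ k : ℕ, 1 ≤ k →
      a k ^ p ≤ a (k - 1) ^ p * (1 - t k ^ p * a (k - 1) ^ p / (A_q * B ^ p))) :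
    ∀ m : ℕ, 1 ≤ m →
      a m ^ p ≤ A_q * B ^ p * (1 + ∑ k ∈ Finset.Icc 1 m, t k ^ p)⁻¹ :=
  stmt_9_general q p A_q B hq hp hAq hB a ha ha0 t ht hrec
end

section
/- Let X be a uniformly smooth Banach space with ρ(u) ≤ γ u^q, 1 < q ≤ 2, p = q/(q−1). Suppose a sequence of remainders {f_m} satisfies: ‖f_m‖ ≤ ‖f_{m-1}‖, and whenever ‖f_k‖ > 2ε, the inequality ‖f_k‖ ≤ ‖f_{k-1}‖ inf_{λ≥0}(1 − λ t_k A^{−1}/2 + 2γ(λ/‖f_{k-1}‖)^q) holds, with ‖f_0‖ ≤ A + ε and A > ε. Then for all m ≥ 1: ‖f_m‖ ≤ max{ 2ε, C(q,γ)(A+ε)(1 + Σ_{k=1}^m t_k^p)^{−1/p} }, where C(q,γ) = 4(2γ)^{1/q}. -/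
/-- Bernoulli-type inequality: `1 + p x ≤ (1-x)^{-p}` (inverse form). -/
lemma stmt10_bern {p x : ℝ} (hp : 0 ≤ p) (hx : 0 ≤ x) (hx1 : x < 1) :
    1 + p * x ≤ ((1 - x) ^ p)⁻¹ := by
  have h1 : (0:ℝ) < 1 - x := by linarith
  have h2 : (1 - x) ^ p ≤ Real.exp (-(p * x)) := by
    have hex : 1 - x ≤ Real.exp (-x) := by
      have := Real.add_one_le_exp (-x); linarith
    calc (1 - x) ^ p ≤ (Real.exp (-x)) ^ p := Real.rpow_le_rpow h1.le hex hp
      _ = Real.exp (-x * p) := (Real.exp_mul _ _).symm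
      _ = Real.exp (-(p * x)) := by ring_nf
  have h3 : 1 + p * x ≤ Real.exp (p * x) := by
    have := Real.add_one_le_exp (p * x); linarith
  have h5 : (0:ℝ) < (1 - x) ^ p := Real.rpow_pos_of_pos h1 p
  have h4 : (1 + p * x) * (1 - x) ^ p ≤ 1 := by
    calc (1 + p * x) * (1 - x) ^ p ≤ Real.exp (p * x) * Real.exp (-(p * x)) :=
          mul_le_mul h3 h2 h5.le (Real.exp_nonneg _)
      _ = Real.exp (p * x + -(p * x)) := (Real.exp_add _ _).symm
      _ = 1 := by simp
  rw [← one_div, le_div_iff₀ h5]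
  exact h4

set_option maxHeartbeats 1000000 in
/-- abstract rate of convergence for the WBGA. If the remainder norms are
nonincreasing, ‖f₀‖ ≤ A + ε, and whenever ‖f_k‖ > 2ε the error reduction inequality
‖f_k‖ ≤ ‖f_{k-1}‖ inf_{λ≥0} (1 - λ t_k A⁻¹/2 + 2γ (λ/‖f_{k-1}‖)^q) holds, then
‖f_m‖ ≤ max{2ε, C(q,γ)(A+ε)(1 + ∑_{k=1}^m t_kᵖ)^{-1/p}} with C(q,γ) = 4(2γ)^{1/q}. -/
theorem stmt_10 {X : Type*} [NormedAddCommGroup X] [NormedSpace ℝ X] [CompleteSpace X]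
    (hsm : UniformlySmooth X)
    (γ q p : ℝ) (hγ : 0 < γ) (hq : 1 < q) (hq2 : q ≤ 2) (hp : p = q / (q - 1))
    (hrho : ∀ u : ℝ, 0 ≤ u → modulusOfSmoothness X u ≤ γ * u ^ q)
    (ε A : ℝ) (hε : 0 ≤ ε) (hA : ε < A)
    (f : ℕ → X) (hf0 : ‖f 0‖ ≤ A + ε)
    (t : ℕ → ℝ) (ht : ∀ k, t k ∈ Set.Icc (0:ℝ) 1)
    (hmono : ∀ m : ℕ, 1 ≤ m → ‖f m‖ ≤ ‖f (m - 1)‖)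
    (hred : ∀ k : ℕ, 1 ≤ k → 2 * ε < ‖f k‖ →
      ‖f k‖ ≤ ‖f (k - 1)‖ * ⨅ l : {x : ℝ // 0 ≤ x},
        (1 - (l : ℝ) * t k * A⁻¹ / 2 + 2 * γ * ((l : ℝ) / ‖f (k - 1)‖) ^ q)) :
    ∀ m : ℕ, 1 ≤ m →
      ‖f m‖ ≤ max (2 * ε)
        (4 * (2 * γ) ^ (1 / q) * (A + ε) *
          (1 + ∑ k ∈ Finset.Icc 1 m, t k ^ p) ^ (-(1 / p))) := by
  intro m hm
  by_cases h2' : ‖f m‖ ≤ 2 * ε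
  · exact le_trans h2' (le_max_left _ _)
  push_neg at h2'
  have hε2 : (0:ℝ) ≤ 2 * ε := by linarith
  have hfm0 : 0 < ‖f m‖ := lt_of_le_of_lt hε2 h2'
  -- basic constants
  have hq0 : (0:ℝ) < q := by linarith
  have hq1 : (0:ℝ) < q - 1 := by linarith
  have hq1' : q - 1 ≠ 0 := ne_of_gt hq1
  have hp0 : 0 < p := by rw [hp]; positivity
  have hp' : p ≠ 0 := ne_of_gt hp0
  have hp1 : 1 ≤ p := by rw [hp, le_div_iff₀ hq1]; linarith
  have hpq : (p - 1) * q = p := by rw [hp]; field_simp [hq1']; ring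
  have hpq2 : 1 / q * p = p - 1 := by rw [hp]; field_simp [hq1']; ring
  have hA0 : 0 < A := lt_of_le_of_lt hε hA
  have hr0 : 0 < A + ε := by linarith
  have hγ2 : (0:ℝ) < 2 * γ := by linarith
  -- γ ≥ 1/4 via the modulus of smoothness at u = 2
  have hγ4 : (1:ℝ)/4 ≤ γ := by
    obtain ⟨x, hxn⟩ : ∃ x : X, ‖x‖ = 1 :=
      ⟨‖f m‖⁻¹ • f m, by
        rw [norm_smul, norm_inv, norm_norm, inv_mul_cancel₀ (ne_of_gt hfm0)]⟩
    have hmem : (1:ℝ) ∈ { r : ℝ | ∃ a b : X, ‖a‖ = 1 ∧ ‖b‖ = 1 ∧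
        r = (‖a + (2:ℝ) • b‖ + ‖a - (2:ℝ) • b‖) / 2 - 1 } := by
      refine ⟨x, x, hxn, hxn, ?_⟩
      have h3 : x + (2:ℝ) • x = (3:ℝ) • x := by module
      have h1 : x - (2:ℝ) • x = (-1:ℝ) • x := by module
      have hn3 : ‖(3:ℝ) • x‖ = 3 := by rw [norm_smul, hxn]; norm_num
      have hn1 : ‖(-1:ℝ) • x‖ = 1 := by rw [norm_smul, hxn]; norm_num
      rw [h3, h1, hn3, hn1]
      norm_num
    have hbdd : BddAbove { r : ℝ | ∃ a b : X, ‖a‖ = 1 ∧ ‖b‖ = 1 ∧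
        r = (‖a + (2:ℝ) • b‖ + ‖a - (2:ℝ) • b‖) / 2 - 1 } := by
      refine ⟨2, ?_⟩
      rintro r ⟨a, b, ha, hb, rfl⟩
      have h1 : ‖a + (2:ℝ) • b‖ ≤ 3 := by
        calc ‖a + (2:ℝ) • b‖ ≤ ‖a‖ + ‖(2:ℝ) • b‖ := norm_add_le _ _
          _ = 3 := by rw [ha, norm_smul, hb]; norm_num
      have h2 : ‖a - (2:ℝ) • b‖ ≤ 3 := by
        calc ‖a - (2:ℝ) • b‖ ≤ ‖a‖ + ‖(2:ℝ) • b‖ := norm_sub_le _ _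
          _ = 3 := by rw [ha, norm_smul, hb]; norm_num
      linarith
    have hm1 : (1:ℝ) ≤ modulusOfSmoothness X 2 := by
      unfold modulusOfSmoothness
      exact le_csSup hbdd hmem
    have hmr := hrho 2 (by norm_num)
    have h2q : (2:ℝ) ^ q ≤ 4 := by
      calc (2:ℝ) ^ q ≤ (2:ℝ) ^ (2:ℝ) := Real.rpow_le_rpow_of_exponent_le one_le_two hq2
        _ = 4 := by
          rw [show (2:ℝ) = ((2:ℕ):ℝ) from by norm_num, Real.rpow_natCast]; norm_num
    nlinarith [Real.rpow_pos_of_pos (by norm_num : (0:ℝ) < 2) q]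
  -- monotonicity
  have hstep : ∀ n : ℕ, ‖f (n+1)‖ ≤ ‖f n‖ := fun n => by
    simpa using hmono (n+1) (Nat.le_add_left 1 n)
  have hanti : Antitone (fun k => ‖f k‖) := antitone_nat_of_succ_le hstep
  have hpos : ∀ k, k ≤ m → 2 * ε < ‖f k‖ := fun k hk => lt_of_lt_of_le h2' (hanti hk)
  -- key constant
  have h8 : (0:ℝ) < 8 * A * γ := by positivity
  have hP : (0:ℝ) < (8 * A * γ) ^ p := Real.rpow_pos_of_pos h8 p
  set c : ℝ := 2 * γ * ((8 * A * γ) ^ p)⁻¹ with hcdef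
  have hc0 : 0 < c := by positivity
  -- key recursive step
  have hkey : ∀ k : ℕ, 1 ≤ k → k ≤ m →
      (‖f (k-1)‖ ^ p)⁻¹ + p * c * t k ^ p ≤ (‖f k‖ ^ p)⁻¹ := by
    intro k hk1 hkm
    have hak : 2 * ε < ‖f k‖ := hpos k hkm
    have hak0 : 0 < ‖f k‖ := lt_of_le_of_lt hε2 hak
    have ha' : ‖f k‖ ≤ ‖f (k-1)‖ := hmono k hk1
    have ha'0 : 0 < ‖f (k-1)‖ := lt_of_lt_of_le hak0 ha'
    by_cases ht0 : t k = 0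
    · rw [ht0, Real.zero_rpow hp', mul_zero, add_zero]
      exact inv_anti₀ (Real.rpow_pos_of_pos hak0 p)
        (Real.rpow_le_rpow hak0.le ha' hp0.le)
    have htpos : 0 < t k := lt_of_le_of_ne (ht k).1 (Ne.symm ht0)
    set a' := ‖f (k-1)‖ with ha'def
    set lam : ℝ := (t k * (8 * A * γ)⁻¹) ^ (p-1) * a' ^ p with hlam
    have hlam0 : 0 ≤ lam := by positivity
    set xx : ℝ := c * t k ^ p * a' ^ p with hxdef
    have hval : 1 - lam * t k * A⁻¹ / 2 + 2 * γ * (lam / a') ^ q = 1 - xx := by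
      have d1 : lam / a' = (t k * (8 * A * γ)⁻¹ * a') ^ (p-1) := by
        rw [hlam, Real.mul_rpow (show (0:ℝ) ≤ t k * (8 * A * γ)⁻¹ by positivity) ha'0.le,
            Real.rpow_sub_one (ne_of_gt ha'0)]
        ring
      have e1 : (lam / a') ^ q = t k ^ p * ((8 * A * γ) ^ p)⁻¹ * a' ^ p := by
        rw [d1, ← Real.rpow_mul (show (0:ℝ) ≤ t k * (8 * A * γ)⁻¹ * a' by positivity), hpq,
            Real.mul_rpow (show (0:ℝ) ≤ t k * (8 * A * γ)⁻¹ by positivity) ha'0.le,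
            Real.mul_rpow htpos.le (show (0:ℝ) ≤ (8 * A * γ)⁻¹ by positivity),
            Real.inv_rpow h8.le]
      have e2 : lam = t k ^ p / t k * ((8 * A * γ) / (8 * A * γ) ^ p) * a' ^ p := by
        rw [hlam, Real.mul_rpow htpos.le (show (0:ℝ) ≤ (8 * A * γ)⁻¹ by positivity),
            Real.inv_rpow h8.le, Real.rpow_sub_one (ne_of_gt htpos),
            Real.rpow_sub_one (ne_of_gt h8), inv_div]
      rw [e1, e2, hxdef, hcdef]
      have hA' : A ≠ 0 := ne_of_gt hA0
      have hP' : (8 * A * γ) ^ p ≠ 0 := ne_of_gt hP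
      have ht' : t k ≠ 0 := ne_of_gt htpos
      field_simp
      ring
    have hle : ‖f k‖ ≤ a' * (1 - xx) := by
      have hred' := hred k hk1 hak
      by_cases hbdd : BddBelow (Set.range (fun l : {x : ℝ // 0 ≤ x} =>
          1 - (l : ℝ) * t k * A⁻¹ / 2 + 2 * γ * ((l : ℝ) / a') ^ q))
      · have h1 : (⨅ l : {x : ℝ // 0 ≤ x},
            (1 - (l : ℝ) * t k * A⁻¹ / 2 + 2 * γ * ((l : ℝ) / a') ^ q)) ≤ 1 - xx := by
          have h2 := ciInf_le hbdd (⟨lam, hlam0⟩ : {x : ℝ // 0 ≤ x})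
          simpa [hval] using h2
        calc ‖f k‖ ≤ a' * ⨅ l : {x : ℝ // 0 ≤ x},
              (1 - (l : ℝ) * t k * A⁻¹ / 2 + 2 * γ * ((l : ℝ) / a') ^ q) := hred'
          _ ≤ a' * (1 - xx) := mul_le_mul_of_nonneg_left h1 ha'0.le
      · exfalso
        rw [Real.iInf_of_not_bddBelow hbdd, mul_zero] at hred'
        linarith
    have hxx0 : 0 ≤ xx := by positivity
    have hxx1 : xx < 1 := by
      by_contra hcon
      push_neg at hcon
      have hnp : a' * (1 - xx) ≤ 0 :=
        mul_nonpos_of_nonneg_of_nonpos ha'0.le (by linarith)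
      linarith
    have hstep1 : ((a' * (1 - xx)) ^ p)⁻¹ ≤ (‖f k‖ ^ p)⁻¹ :=
      inv_anti₀ (Real.rpow_pos_of_pos hak0 p)
        (Real.rpow_le_rpow hak0.le hle hp0.le)
    have hsplit : ((a' * (1 - xx)) ^ p)⁻¹ = (a' ^ p)⁻¹ * ((1 - xx) ^ p)⁻¹ := by
      rw [Real.mul_rpow ha'0.le (by linarith), mul_inv]
    have hbern := stmt10_bern hp0.le hxx0 hxx1
    have hstep2 : (a' ^ p)⁻¹ * (1 + p * xx) ≤ (a' ^ p)⁻¹ * ((1 - xx) ^ p)⁻¹ :=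
      mul_le_mul_of_nonneg_left hbern (by positivity)
    have hxval : (a' ^ p)⁻¹ * (1 + p * xx) = (a' ^ p)⁻¹ + p * c * t k ^ p := by
      rw [hxdef]
      have ha'p : a' ^ p ≠ 0 := ne_of_gt (Real.rpow_pos_of_pos ha'0 p)
      field_simp
    calc (a' ^ p)⁻¹ + p * c * t k ^ p = (a' ^ p)⁻¹ * (1 + p * xx) := hxval.symm
      _ ≤ (a' ^ p)⁻¹ * ((1 - xx) ^ p)⁻¹ := hstep2
      _ = ((a' * (1 - xx)) ^ p)⁻¹ := hsplit.symm
      _ ≤ (‖f k‖ ^ p)⁻¹ := hstep1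
  -- induction
  have hind : ∀ k, k ≤ m →
      ((A + ε) ^ p)⁻¹ + p * c * ∑ j ∈ Finset.Icc 1 k, t j ^ p ≤ (‖f k‖ ^ p)⁻¹ := by
    intro k
    induction k with
    | zero =>
      intro _
      rw [show Finset.Icc 1 0 = (∅ : Finset ℕ) from Finset.Icc_eq_empty (by omega),
          Finset.sum_empty, mul_zero, add_zero]
      have hf00 : 0 < ‖f 0‖ := lt_of_le_of_lt hε2 (hpos 0 (Nat.zero_le m))
      exact inv_anti₀ (Real.rpow_pos_of_pos hf00 p)
        (Real.rpow_le_rpow hf00.le hf0 hp0.le)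
    | succ n ih =>
      intro hn
      have hsum : ∑ j ∈ Finset.Icc 1 (n+1), t j ^ p
          = (∑ j ∈ Finset.Icc 1 n, t j ^ p) + t (n+1) ^ p :=
        Finset.sum_Icc_succ_top (by omega) _
      have h1 := ih (by omega)
      have h2 := hkey (n+1) (by omega) hn
      simp only [Nat.add_sub_cancel] at h2
      rw [hsum]
      calc ((A + ε) ^ p)⁻¹ + p * c * ((∑ j ∈ Finset.Icc 1 n, t j ^ p) + t (n+1) ^ p)
          = (((A + ε) ^ p)⁻¹ + p * c * ∑ j ∈ Finset.Icc 1 n, t j ^ p)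
            + p * c * t (n+1) ^ p := by ring
        _ ≤ (‖f n‖ ^ p)⁻¹ + p * c * t (n+1) ^ p := add_le_add_left h1 _
        _ ≤ (‖f (n+1)‖ ^ p)⁻¹ := h2
  -- final constants
  set S : ℝ := ∑ k ∈ Finset.Icc 1 m, t k ^ p with hS
  have hS0 : 0 ≤ S := Finset.sum_nonneg fun j _ => Real.rpow_nonneg (ht j).1 p
  have h1S : (0:ℝ) < 1 + S := by linarith
  have hC2 : (2:ℝ) ≤ 4 * (2 * γ) ^ (1/q) := by
    have hh1 : (1:ℝ)/2 ≤ 2 * γ := by linarith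
    have hh2 : ((1:ℝ)/2) ^ (1/q) ≤ (2 * γ) ^ (1/q) :=
      Real.rpow_le_rpow (by norm_num) hh1 (by positivity)
    have hh3 : ((1:ℝ)/2) ^ (1:ℝ) ≤ ((1:ℝ)/2) ^ (1/q) :=
      Real.rpow_le_rpow_of_exponent_ge (by norm_num) (by norm_num)
        (by rw [div_le_one hq0]; linarith)
    rw [Real.rpow_one] at hh3
    linarith
  set C : ℝ := 4 * (2 * γ) ^ (1/q) * (A + ε) with hC
  have hC0 : 0 < C := by rw [hC]; positivity
  have hCr : A + ε ≤ C := by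
    rw [hC]
    nlinarith [mul_le_mul_of_nonneg_right hC2 hr0.le]
  have hCp : C ^ p = 4 ^ p * (2 * γ) ^ (p-1) * (A + ε) ^ p := by
    rw [hC, Real.mul_rpow (show (0:ℝ) ≤ 4 * (2 * γ) ^ (1/q) by positivity) hr0.le,
        Real.mul_rpow (show (0:ℝ) ≤ 4 by norm_num) (by positivity),
        ← Real.rpow_mul hγ2.le, hpq2]
  have key1 : (C ^ p)⁻¹ ≤ ((A + ε) ^ p)⁻¹ :=
    inv_anti₀ (Real.rpow_pos_of_pos hr0 p) (Real.rpow_le_rpow hr0.le hCr hp0.le)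
  have key2 : (C ^ p)⁻¹ ≤ p * c := by
    have h8e : (8 : ℝ) * A * γ = 4 * A * (2 * γ) := by ring
    have hc8 : c = 2 * γ * (4 ^ p * A ^ p * ((2 * γ) ^ (p-1) * (2 * γ)))⁻¹ := by
      rw [hcdef, h8e, Real.mul_rpow (show (0:ℝ) ≤ 4 * A by positivity) hγ2.le,
          Real.mul_rpow (show (0:ℝ) ≤ 4 by norm_num) hA0.le,
          show (2 * γ : ℝ) ^ p = (2 * γ) ^ (p-1) * (2 * γ) from by
            rw [Real.rpow_sub_one (ne_of_gt hγ2)]; field_simp]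
    have hineq : A ^ p ≤ p * (A + ε) ^ p := by
      have i1 : A ^ p ≤ (A + ε) ^ p := Real.rpow_le_rpow hA0.le (by linarith) hp0.le
      nlinarith [Real.rpow_pos_of_pos hr0 p]
    have h4p : (0:ℝ) < 4 ^ p := Real.rpow_pos_of_pos (by norm_num) p
    have hGp : (0:ℝ) < (2 * γ) ^ (p-1) := Real.rpow_pos_of_pos hγ2 (p-1)
    have hAp : (0:ℝ) < A ^ p := Real.rpow_pos_of_pos hA0 p
    have hRp : (0:ℝ) < (A + ε) ^ p := Real.rpow_pos_of_pos hr0 p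
    have hCpp : (0:ℝ) < C ^ p := Real.rpow_pos_of_pos hC0 p
    have e4 : p * c * C ^ p = p * (A + ε) ^ p / A ^ p := by
      rw [hCp, hc8]
      field_simp
    have e5 : (1:ℝ) ≤ p * c * C ^ p := by
      rw [e4]
      rw [le_div_iff₀ hAp]
      linarith [hineq]
    calc (C ^ p)⁻¹ = 1 / C ^ p := (one_div _).symm
      _ ≤ (p * c * C ^ p) / C ^ p := by gcongr
      _ = p * c := by field_simp
  -- conclude
  refine le_trans ?_ (le_max_right _ _)
  have hB0 : 0 < C * (1 + S) ^ (-(1 / p)) := by positivity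
  have hz : -p < 0 := neg_lt_zero.mpr hp0
  rw [← Real.rpow_le_rpow_iff_of_neg hB0 hfm0 hz]
  have hBp : (C * (1 + S) ^ (-(1 / p))) ^ (-p) = (C ^ p)⁻¹ * (1 + S) := by
    rw [Real.rpow_neg (by positivity),
        Real.mul_rpow hC0.le (Real.rpow_nonneg h1S.le _),
        ← Real.rpow_mul h1S.le,
        show -(1 / p) * p = -1 from by field_simp,
        Real.rpow_neg h1S.le, Real.rpow_one, mul_inv, inv_inv]
  rw [hBp, Real.rpow_neg (norm_nonneg (f m))]
  calc (C ^ p)⁻¹ * (1 + S) = (C ^ p)⁻¹ + (C ^ p)⁻¹ * S := by ring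
    _ ≤ ((A + ε) ^ p)⁻¹ + p * c * S :=
        add_le_add key1 (mul_le_mul_of_nonneg_right key2 hS0)
    _ ≤ (‖f m‖ ^ p)⁻¹ := hind m le_rfl
end

section
/- Let X be a uniformly smooth Banach space with modulus of smoothness ρ(u) ≤ γ u^q for 1 < q ≤ 2, and let ρ^q(u) := γ u^q. Then for every θ > 0 and t ∈ (0,1], the root ξ(ρ,t,θ) of ρ(u) = θ t u satisfies ξ(ρ,t,θ) ≥ ξ(ρ^q,t,θ) = (θ t/γ)^{1/(q−1)}. Consequently, if Σ_m t_m^p = ∞ with p = q/(q−1), then Σ_m t_m ξ_m(ρ,τ,θ) = ∞ for every θ > 0. -/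
/-- if ρ(u) ≤ γ u^q, then any root ξ > 0 of ρ(u) = θ t u satisfies
ξ ≥ (θt/γ)^{1/(q-1)}; consequently, divergence of ∑ t_mᵖ implies divergence of
∑ t_m ξ_m for every θ > 0. -/
theorem stmt_11 {X : Type*} [NormedAddCommGroup X] [NormedSpace ℝ X] [CompleteSpace X]
    (γ q p : ℝ) (hγ : 0 < γ) (hq : 1 < q) (hq2 : q ≤ 2) (hp : p = q / (q - 1))
    (hrho : ∀ u : ℝ, 0 ≤ u → modulusOfSmoothness X u ≤ γ * u ^ q)
    (θ : ℝ) (hθ : 0 < θ) :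
    (∀ t : ℝ, t ∈ Set.Ioc (0:ℝ) 1 → ∀ ξ : ℝ, 0 < ξ →
      modulusOfSmoothness X ξ = θ * t * ξ → (θ * t / γ) ^ (1 / (q - 1)) ≤ ξ) ∧
    (∀ (τ : ℕ → ℝ), (∀ m, τ m ∈ Set.Ioc (0:ℝ) 1) →
      ∀ (ξ : ℕ → ℝ), (∀ m, 0 < ξ m ∧ modulusOfSmoothness X (ξ m) = θ * τ m * ξ m) →
        ¬ Summable (fun m => τ m ^ p) → ¬ Summable (fun m => τ m * ξ m)) := by
  have hq1 : 0 < q - 1 := by linarith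
  have main : ∀ t : ℝ, t ∈ Set.Ioc (0:ℝ) 1 → ∀ ξ : ℝ, 0 < ξ →
      modulusOfSmoothness X ξ = θ * t * ξ → (θ * t / γ) ^ (1 / (q - 1)) ≤ ξ := by
    intro t ht ξ hξ hroot
    have h1 : θ * t * ξ ≤ γ * ξ ^ q := hroot ▸ hrho ξ hξ.le
    have hξq : ξ ^ (q - 1) * ξ = ξ ^ q := by
      rw [Real.rpow_sub hξ, Real.rpow_one,
        div_mul_cancel₀ _ (ne_of_gt hξ)]
    have h2 : θ * t * ξ ≤ γ * ξ ^ (q - 1) * ξ := by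
      rw [mul_assoc γ, hξq]; exact h1
    have hdiv : θ * t / γ ≤ ξ ^ (q - 1) := by
      rw [div_le_iff₀ hγ]
      nlinarith [h2, hξ]
    have hbase : 0 ≤ θ * t / γ := div_nonneg (mul_nonneg hθ.le ht.1.le) hγ.le
    calc (θ * t / γ) ^ (1 / (q - 1)) ≤ (ξ ^ (q - 1)) ^ (1 / (q - 1)) :=
          Real.rpow_le_rpow hbase hdiv (one_div_nonneg.mpr hq1.le)
      _ = ξ := by
          rw [one_div, Real.rpow_rpow_inv hξ.le (ne_of_gt hq1)]
  refine ⟨main, ?_⟩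
  intro τ hτ ξ hξ hns hsum
  apply hns
  set c : ℝ := (θ / γ) ^ (1 / (q - 1)) with hc
  have hcpos : 0 < c := Real.rpow_pos_of_pos (div_pos hθ hγ) _
  have key : ∀ m, τ m ^ p ≤ c⁻¹ * (τ m * ξ m) := by
    intro m
    have htm := (hτ m).1
    have hξm := (hξ m).1
    have hge : (θ * τ m / γ) ^ (1 / (q - 1)) ≤ ξ m :=
      main (τ m) (hτ m) (ξ m) hξm (hξ m).2
    have hsplit : (θ * τ m / γ) ^ (1 / (q - 1)) = c * τ m ^ (1 / (q - 1)) := by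
      rw [hc, ← Real.mul_rpow (by positivity) htm.le]
      ring_nf
    have hpow : τ m * (c * τ m ^ (1 / (q - 1))) = c * τ m ^ p := by
      rw [hp]
      have : q / (q - 1) = 1 + 1 / (q - 1) := by field_simp; ring
      rw [this, Real.rpow_add htm, Real.rpow_one]
      ring
    have : c * τ m ^ p ≤ τ m * ξ m := by
      rw [← hpow]
      exact mul_le_mul_of_nonneg_left (hsplit ▸ hge) htm.le
    rw [le_inv_mul_iff₀ hcpos]
    linarith
  exact Summable.of_nonneg_of_le (fun m => Real.rpow_nonneg (hτ m).1.le p) key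
    (hsum.mul_left c⁻¹)
end
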